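/- No one-way deterministic one-counter automaton (1D1CA) over the alphabet {a,b,c,d} solves the promise problem ONE-NONE, i.e., for every 1D1CA M it is not the case that M accepts every string in ONE·NONE and rejects every string in NONE·ONE. -/

import Mathlib

/-- Input symbols extended with the left (`cent`) and right (`dollar`) end-markers. -/
inductive TSym (α : Type) : Type
  | cent : TSym α
  | letter : α → TSym α
  | dollar : TSym α

/-- The tape content `¢ w $` for an input word `w`. -/
def tagged {α : Type} (w : List α) : List (TSym α) :=
  TSym.cent :: (w.map TSym.letter ++ [TSym.dollar])

/-- A one-way deterministic one-counter automaton. -/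
structure OneD1CA (α : Type) where
  Q : Type
  [fintypeQ : Fintype Q]
  [decQ : DecidableEq Q]
  q0 : Q
  acc : Set Q
  m : ℕ
  δ : Q → TSym α → Bool → Q × ℤ
  bound : ∀ q σ z, |(δ q σ z).2| ≤ (m : ℤ)

attribute [instance] OneD1CA.fintypeQ OneD1CA.decQ

namespace OneD1CA

variable {α : Type} (M : OneD1CA α)

/-- One computation step on a configuration (state, counter value). -/
def step (p : M.Q × ℤ) (σ : TSym α) : M.Q × ℤ :=
  ((M.δ p.1 σ (decide (p.2 = 0))).1, p.2 + (M.δ p.1 σ (decide (p.2 = 0))).2)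

/-- Configuration reached from the initial configuration after reading a list of tape symbols. -/
def confAfter (l : List (TSym α)) : M.Q × ℤ :=
  l.foldl M.step (M.q0, 0)

/-- The automaton accepts `w` iff the state after reading `¢ w $` is accepting. -/
def accepts (w : List α) : Prop :=
  (M.confAfter (tagged w)).1 ∈ M.acc

/-- The automaton recognizes the language `L` if it accepts exactly the members of `L`. -/
def recognizes (L : Set (List α)) : Prop :=
  ∀ w : List α, M.accepts w ↔ w ∈ L

end OneD1CA

/-- The alphabet `{a, b, c, d}`. -/
inductive ΓN : Type
  | a : ΓN
  | b : ΓN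
  | c : ΓN
  | d : ΓN
deriving DecidableEq

/-- Exactly one of three propositions holds. -/
def exactlyOne (P Q R : Prop) : Prop :=
  (P ∧ ¬Q ∧ ¬R) ∨ (¬P ∧ Q ∧ ¬R) ∨ (¬P ∧ ¬Q ∧ R)

/-- `#_a(u) = #_b(u)`. -/
def eqAB (u : List ΓN) : Prop := u.count ΓN.a = u.count ΓN.b
/-- `#_b(u) = #_c(u)`. -/
def eqBC (u : List ΓN) : Prop := u.count ΓN.b = u.count ΓN.c
/-- `#_c(u) = #_a(u)`. -/
def eqCA (u : List ΓN) : Prop := u.count ΓN.c = u.count ΓN.a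

/-- The language `ONE`: strings `u ++ y` with `u ∈ {a,b,c}*`, `y ∈ {d}*`,
`|y| ≥ |u|`, and exactly one of the three count equalities holding for `u`. -/
def ONE : Language ΓN :=
  {w | ∃ u y : List ΓN, w = u ++ y ∧ (∀ x ∈ u, x ≠ ΓN.d) ∧ (∀ x ∈ y, x = ΓN.d) ∧
    u.length ≤ y.length ∧ exactlyOne (eqAB u) (eqBC u) (eqCA u)}

/-- The language `NONE`: as `ONE`, but none of the three count equalities holds. -/
def NONE : Language ΓN :=
  {w | ∃ u y : List ΓN, w = u ++ y ∧ (∀ x ∈ u, x ≠ ΓN.d) ∧ (∀ x ∈ y, x = ΓN.d) ∧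
    u.length ≤ y.length ∧ ¬ eqAB u ∧ ¬ eqBC u ∧ ¬ eqCA u}

/-!
Feed the automaton, from a fixed configuration, the `(n+1)²` words `a^i b^j c^(2n-i-j)` with
`i, j ≤ n`. They all have length `2n`, so the counter stays in a window of `4mn + 1` values and,
for `n` large, two of these words with different count vectors lead to the same configuration.
Two count vectors with the same sum can be extended by a common `a^x b^y c^z` so that exactly one
count equality holds for the first and none for the second; padding both with `d`s gives a word
of `ONE` and a word of `NONE` reaching the same configuration. Doing this once after `¢` and once
more after the `ONE`-word makes `u₁ v₂ ∈ ONE·NONE` and `u₂ v₁ ∈ NONE·ONE` end in the same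
configuration, so they are accepted or rejected together.
-/

namespace OneD1CA

variable {α : Type} (M : OneD1CA α)

def readFrom (c : M.Q × ℤ) (w : List α) : M.Q × ℤ :=
  (w.map TSym.letter).foldl M.step c

theorem readFrom_append (c : M.Q × ℤ) (u v : List α) :
    M.readFrom c (u ++ v) = M.readFrom (M.readFrom c u) v := by
  simp [readFrom, List.foldl_append]

theorem accepts_iff_readFrom (w : List α) :
    M.accepts w ↔ (M.step (M.readFrom (M.step (M.q0, 0) TSym.cent) w) TSym.dollar).1 ∈ M.acc := by
  simp [accepts, confAfter, tagged, readFrom, List.foldl_append]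

theorem abs_step_sub_le (c : M.Q × ℤ) (σ : TSym α) : |(M.step c σ).2 - c.2| ≤ M.m := by
  simpa [step] using M.bound c.1 σ (decide (c.2 = 0))

theorem abs_readFrom_sub_le (c : M.Q × ℤ) (w : List α) :
    |(M.readFrom c w).2 - c.2| ≤ M.m * w.length := by
  induction w generalizing c with
  | nil => simp [readFrom]
  | cons a w ih =>
    calc |(M.readFrom (M.step c (TSym.letter a)) w).2 - c.2|
        ≤ |(M.readFrom (M.step c (TSym.letter a)) w).2 - (M.step c (TSym.letter a)).2|
          + |(M.step c (TSym.letter a)).2 - c.2| := abs_sub_le _ _ _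
      _ ≤ M.m * w.length + M.m := add_le_add (ih _) (M.abs_step_sub_le c _)
      _ = M.m * (a :: w).length := by push_cast [List.length_cons]; ring

theorem exists_ne_readFrom_eq {ι : Type*} (s : Finset ι) (f : ι → List α) (L : ℕ)
    (hf : ∀ i ∈ s, (f i).length = L) (hs : Fintype.card M.Q * (2 * M.m * L + 1) < s.card)
    (c : M.Q × ℤ) : ∃ i ∈ s, ∃ j ∈ s, i ≠ j ∧ M.readFrom c (f i) = M.readFrom c (f j) := by
  set B : ℤ := M.m * L
  have hmaps : ∀ i ∈ s,
      M.readFrom c (f i) ∈ (Finset.univ ×ˢ Finset.Icc (c.2 - B) (c.2 + B) : Finset (M.Q × ℤ)) := by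
    intro i hi
    have hbound := M.abs_readFrom_sub_le c (f i)
    rw [hf i hi, abs_le] at hbound
    exact Finset.mem_product.2 ⟨Finset.mem_univ _, Finset.mem_Icc.2 ⟨by linarith, by linarith⟩⟩
  refine Finset.exists_ne_map_eq_of_card_lt_of_maps_to ?_ fun i hi => hmaps i hi
  rw [Finset.card_product, Finset.card_univ, Int.card_Icc]
  rwa [show c.2 + B + 1 - (c.2 - B) = ((2 * M.m * L + 1 : ℕ) : ℤ) by push_cast [B]; ring,
    Int.toNat_natCast]

end OneD1CA

def abcWord (i j l : ℕ) : List ΓN :=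
  List.replicate i ΓN.a ++ List.replicate j ΓN.b ++ List.replicate l ΓN.c

theorem length_abcWord (i j l : ℕ) : (abcWord i j l).length = i + j + l := by
  simp [abcWord, Nat.add_assoc]

theorem d_not_mem_abcWord (i j l : ℕ) : ΓN.d ∉ abcWord i j l := by
  simp [abcWord, List.mem_replicate]

@[simp]
theorem count_abcWord (i j l : ℕ) :
    (abcWord i j l).count ΓN.a = i ∧ (abcWord i j l).count ΓN.b = j ∧
      (abcWord i j l).count ΓN.c = l := by
  simp [abcWord, List.count_replicate]

theorem exists_abcWord_readFrom_eq (M : OneD1CA ΓN) (c : M.Q × ℤ) :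
    ∃ i₁ j₁ l₁ i₂ j₂ l₂ : ℕ, i₁ + j₁ + l₁ = i₂ + j₂ + l₂ ∧ (i₁, j₁) ≠ (i₂, j₂) ∧
      M.readFrom c (abcWord i₁ j₁ l₁) = M.readFrom c (abcWord i₂ j₂ l₂) := by
  set K := Fintype.card M.Q
  set n := K * (4 * M.m + 1)
  have hlen : ∀ p ∈ Finset.range (n + 1) ×ˢ Finset.range (n + 1),
      (abcWord p.1 p.2 (2 * n - p.1 - p.2)).length = 2 * n := by
    intro p hp
    simp only [Finset.mem_product, Finset.mem_range] at hp
    rw [length_abcWord]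
    omega
  have hcard :
      K * (2 * M.m * (2 * n) + 1) < (Finset.range (n + 1) ×ˢ Finset.range (n + 1)).card := by
    have hn : 4 * M.m * K + K = n := by ring
    rw [Finset.card_product, Finset.card_range]
    calc K * (2 * M.m * (2 * n) + 1) = 4 * M.m * K * n + K := by ring
      _ < n * n + 2 * n + 1 := by nlinarith
      _ = (n + 1) * (n + 1) := by ring
  obtain ⟨⟨i₁, j₁⟩, h₁, ⟨i₂, j₂⟩, h₂, hne, heq⟩ := M.exists_ne_readFrom_eq _ _ _ hlen hcard c
  simp only [Finset.mem_product, Finset.mem_range] at h₁ h₂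
  exact ⟨_, _, _, _, _, _, by omega, hne, heq⟩

/-- If the differences `i - j` agree, the triples differ in `j - l`: equalize `b` and `c` of the
first and push `a` out of reach; otherwise equalize `a` and `b` of the first and push `c` away. -/
theorem exists_exactlyOne_and_none (i₁ j₁ l₁ i₂ j₂ l₂ : ℕ) (hsum : i₁ + j₁ + l₁ = i₂ + j₂ + l₂)
    (hne : (i₁, j₁) ≠ (i₂, j₂)) :
    ∃ x y z : ℕ, exactlyOne (i₁ + x = j₁ + y) (j₁ + y = l₁ + z) (l₁ + z = i₁ + x) ∧
      i₂ + x ≠ j₂ + y ∧ j₂ + y ≠ l₂ + z ∧ l₂ + z ≠ i₂ + x := by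
  rw [Ne, Prod.mk.injEq] at hne
  by_cases h : i₁ + j₂ = i₂ + j₁
  · exact ⟨0, l₁ + i₁ + i₂ + 1, j₁ + i₁ + i₂ + 1, by unfold exactlyOne; omega⟩
  · exact ⟨j₁ + l₁ + l₂ + 1, i₁ + l₁ + l₂ + 1, 0, by unfold exactlyOne; omega⟩

def padD (u : List ΓN) : List ΓN :=
  u ++ List.replicate u.length ΓN.d

theorem padD_mem_ONE {u : List ΓN} (hu : ΓN.d ∉ u) (h : exactlyOne (eqAB u) (eqBC u) (eqCA u)) :
    padD u ∈ ONE :=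
  ⟨u, _, rfl, fun _ hx hd => hu (hd ▸ hx), fun _ => List.eq_of_mem_replicate, by simp, h⟩

theorem padD_mem_NONE {u : List ΓN} (hu : ΓN.d ∉ u) (hab : ¬ eqAB u) (hbc : ¬ eqBC u)
    (hca : ¬ eqCA u) : padD u ∈ NONE :=
  ⟨u, _, rfl, fun _ hx hd => hu (hd ▸ hx), fun _ => List.eq_of_mem_replicate, by simp,
    hab, hbc, hca⟩

theorem exists_mem_ONE_mem_NONE_readFrom_eq (M : OneD1CA ΓN) (c : M.Q × ℤ) :
    ∃ z₁ ∈ ONE, ∃ z₂ ∈ NONE, M.readFrom c z₁ = M.readFrom c z₂ := by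
  obtain ⟨i₁, j₁, l₁, i₂, j₂, l₂, hsum, hne, heq⟩ := exists_abcWord_readFrom_eq M c
  obtain ⟨x, y, z, hone, hab, hbc, hca⟩ := exists_exactlyOne_and_none _ _ _ _ _ _ hsum hne
  set u₁ := abcWord i₁ j₁ l₁ ++ abcWord x y z
  set u₂ := abcWord i₂ j₂ l₂ ++ abcWord x y z
  have hlen : u₁.length = u₂.length := by
    simp only [u₁, u₂, List.length_append, length_abcWord]
    omega
  refine ⟨padD u₁, padD_mem_ONE ?_ ?_, padD u₂, padD_mem_NONE ?_ ?_ ?_ ?_, ?_⟩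
  · simp [u₁, d_not_mem_abcWord]
  · simpa [u₁, eqAB, eqBC, eqCA, List.count_append] using hone
  · simp [u₂, d_not_mem_abcWord]
  · simpa [u₂, eqAB, List.count_append] using hab
  · simpa [u₂, eqBC, List.count_append] using hbc
  · simpa [u₂, eqCA, List.count_append] using hca
  · simp only [padD, hlen, u₁, u₂, M.readFrom_append, heq]

/-- no 1D1CA solves the promise problem `ONE-NONE`. -/
theorem stmt6 (M : OneD1CA ΓN) :
    ¬ ((∀ w ∈ ONE * NONE, M.accepts w) ∧ (∀ w ∈ NONE * ONE, ¬ M.accepts w)) := by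
  rintro ⟨hyes, hno⟩
  set c₀ := M.step (M.q0, 0) TSym.cent
  obtain ⟨u₁, hu₁, u₂, hu₂, hu⟩ := exists_mem_ONE_mem_NONE_readFrom_eq M c₀
  obtain ⟨v₁, hv₁, v₂, hv₂, hv⟩ := exists_mem_ONE_mem_NONE_readFrom_eq M (M.readFrom c₀ u₁)
  have hacc : M.accepts (u₁ ++ v₂) := hyes _ (Language.mem_mul.mpr ⟨u₁, hu₁, v₂, hv₂, rfl⟩)
  have hrej : ¬ M.accepts (u₂ ++ v₁) := hno _ (Language.mem_mul.mpr ⟨u₂, hu₂, v₁, hv₁, rfl⟩)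
  rw [M.accepts_iff_readFrom, M.readFrom_append] at hacc hrej
  rw [← hu, hv] at hrej
  exact hrej hacc
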